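/- arXiv:2012.03558 — 2 statements merged into one kernel-verified Lean document; each statement's English description precedes it below -/
import Mathlib

section
/- There exist an infra-topological space (X, τ) and i-genuine sets A, B ⊆ X such that A ∪ B is not i-genuine. -/
def IsInfraTop {X : Type*} (τ : Set (Set X)) : Prop :=
  ∅ ∈ τ ∧ Set.univ ∈ τ ∧ ∀ A B : Set X, A ∈ τ → B ∈ τ → A ∩ B ∈ τ

def iInt {X : Type*} (τ : Set (Set X)) (A : Set X) : Set X :=
  ⋃₀ {O | O ∈ τ ∧ O ⊆ A}

def IGenuine {X : Type*} (τ : Set (Set X)) (A : Set X) : Prop :=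
  iInt τ A ∈ τ

def InfraClosed {X : Type*} (τ : Set (Set X)) (C : Set X) : Prop :=
  Cᶜ ∈ τ

def iCl {X : Type*} (τ : Set (Set X)) (A : Set X) : Set X :=
  ⋂₀ {C | InfraClosed τ C ∧ A ⊆ C}

def CGenuine {X : Type*} (τ : Set (Set X)) (A : Set X) : Prop :=
  InfraClosed τ (iCl τ A)

/-! For open `A` and `B` the i-interior of `A ∪ B` is `A ∪ B` itself, so `A ∪ B` is i-genuine
exactly when it is open. An infra-topology need not be closed under unions: on three points,
`{∅, X, {0}, {1}}` is closed under intersections but misses `{0, 1}`. -/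

section iInt

variable {X : Type*} {τ : Set (Set X)} {A B : Set X}

theorem iInt_subset (τ : Set (Set X)) (A : Set X) : iInt τ A ⊆ A :=
  Set.sUnion_subset fun _ hO => hO.2

theorem subset_iInt_of_mem (hO : B ∈ τ) (hBA : B ⊆ A) : B ⊆ iInt τ A :=
  Set.subset_sUnion_of_mem ⟨hO, hBA⟩

theorem iInt_eq_self_of_mem (hA : A ∈ τ) : iInt τ A = A :=
  (iInt_subset τ A).antisymm (subset_iInt_of_mem hA subset_rfl)

theorem iGenuine_of_mem (hA : A ∈ τ) : IGenuine τ A := by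
  rw [IGenuine, iInt_eq_self_of_mem hA]
  exact hA

theorem iInt_union_of_mem (hA : A ∈ τ) (hB : B ∈ τ) : iInt τ (A ∪ B) = A ∪ B :=
  (iInt_subset τ _).antisymm <| Set.union_subset
    (subset_iInt_of_mem hA Set.subset_union_left) (subset_iInt_of_mem hB Set.subset_union_right)

theorem iGenuine_union_iff_of_mem (hA : A ∈ τ) (hB : B ∈ τ) :
    IGenuine τ (A ∪ B) ↔ A ∪ B ∈ τ := by
  rw [IGenuine, iInt_union_of_mem hA hB]

end iInt

theorem isInfraTop_two_singletons {X : Type*} {a b : X} (hab : a ≠ b) :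
    IsInfraTop ({∅, Set.univ, {a}, {b}} : Set (Set X)) := by
  have hdisj : ({a} ∩ {b} : Set X) = ∅ := Set.singleton_inter_eq_empty.mpr hab
  have hdisj' : ({b} ∩ {a} : Set X) = ∅ := Set.singleton_inter_eq_empty.mpr hab.symm
  refine ⟨by simp, by simp, ?_⟩
  rintro U V (rfl | rfl | rfl | rfl) (rfl | rfl | rfl | rfl) <;> simp [hdisj, hdisj']

theorem union_not_mem_two_singletons {X : Type*} {a b c : X} (hab : a ≠ b)
    (hca : c ≠ a) (hcb : c ≠ b) :
    ({a} ∪ {b} : Set X) ∉ ({∅, Set.univ, {a}, {b}} : Set (Set X)) := by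
  simp only [Set.mem_insert_iff, Set.mem_singleton_iff, Set.ext_iff]
  rintro (h | h | h | h)
  · simpa using h a
  · simpa [hca, hcb] using h c
  · simpa [hab.symm] using h b
  · simpa [hab] using h a

theorem stmt7 : ∃ (X : Type) (τ : Set (Set X)) (A B : Set X),
    IsInfraTop τ ∧ IGenuine τ A ∧ IGenuine τ B ∧ ¬ IGenuine τ (A ∪ B) := by
  have h01 : (0 : Fin 3) ≠ 1 := by decide
  have h20 : (2 : Fin 3) ≠ 0 := by decide
  have h21 : (2 : Fin 3) ≠ 1 := by decide
  have hA : ({0} : Set (Fin 3)) ∈ ({∅, Set.univ, {0}, {1}} : Set (Set (Fin 3))) := by simp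
  have hB : ({1} : Set (Fin 3)) ∈ ({∅, Set.univ, {0}, {1}} : Set (Set (Fin 3))) := by simp
  refine ⟨Fin 3, _, {0}, {1}, isInfraTop_two_singletons h01,
    iGenuine_of_mem hA, iGenuine_of_mem hB, ?_⟩
  rw [iGenuine_union_iff_of_mem hA hB]
  exact union_not_mem_two_singletons h01 h20 h21
end

section
/- In an infra-topological space (X, τ), if A and B are c-genuine, then A ∪ B is c-genuine, and iCl(A ∪ B) = iCl(A) ∪ iCl(B) is the smallest infra-closed set containing A ∪ B. -/
/-! Binary unions of infra-closed sets are infra-closed (De Morgan), so when `iCl A` and `iCl B`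
are infra-closed, `iCl A ∪ iCl B` is an infra-closed superset of `A ∪ B`; it is therefore
the least one, i.e. `iCl (A ∪ B)`. -/

section InfraClosure

variable {X : Type*} {τ : Set (Set X)}

theorem InfraClosed.union (hτ : IsInfraTop τ) {C D : Set X} (hC : InfraClosed τ C)
    (hD : InfraClosed τ D) : InfraClosed τ (C ∪ D) := by
  unfold InfraClosed at *
  rw [Set.compl_union]
  exact hτ.2.2 _ _ hC hD

theorem iCl_subset_of_infraClosed {A C : Set X} (hC : InfraClosed τ C) (hAC : A ⊆ C) :
    iCl τ A ⊆ C :=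
  Set.sInter_subset_of_mem ⟨hC, hAC⟩

theorem subset_iCl (A : Set X) : A ⊆ iCl τ A :=
  Set.subset_sInter fun _ hC => hC.2

theorem iCl_mono {A B : Set X} (hAB : A ⊆ B) : iCl τ A ⊆ iCl τ B :=
  Set.sInter_subset_sInter fun _ hC => ⟨hC.1, hAB.trans hC.2⟩

theorem CGenuine.iCl_union (hτ : IsInfraTop τ) {A B : Set X} (hA : CGenuine τ A)
    (hB : CGenuine τ B) : iCl τ (A ∪ B) = iCl τ A ∪ iCl τ B :=
  (iCl_subset_of_infraClosed (InfraClosed.union hτ hA hB)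
      (Set.union_subset_union (subset_iCl A) (subset_iCl B))).antisymm
    (Set.union_subset (iCl_mono Set.subset_union_left) (iCl_mono Set.subset_union_right))

theorem CGenuine.union (hτ : IsInfraTop τ) {A B : Set X} (hA : CGenuine τ A)
    (hB : CGenuine τ B) : CGenuine τ (A ∪ B) := by
  rw [CGenuine, hA.iCl_union hτ hB]
  exact InfraClosed.union hτ hA hB

end InfraClosure

theorem stmt17 {X : Type*} (τ : Set (Set X)) (hτ : IsInfraTop τ)
    (A B : Set X) (hA : CGenuine τ A) (hB : CGenuine τ B) :
    CGenuine τ (A ∪ B) ∧ iCl τ (A ∪ B) = iCl τ A ∪ iCl τ B ∧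
    InfraClosed τ (iCl τ (A ∪ B)) ∧ A ∪ B ⊆ iCl τ (A ∪ B) ∧
    ∀ C : Set X, InfraClosed τ C → A ∪ B ⊆ C → iCl τ (A ∪ B) ⊆ C :=
  ⟨hA.union hτ hB, hA.iCl_union hτ hB, hA.union hτ hB, subset_iCl _,
    fun _ hC hABC => iCl_subset_of_infraClosed hC hABC⟩
end
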